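/- arXiv:2301.10331 — 2 statements merged into one kernel-verified Lean document; each statement's English description precedes it below -/
import Mathlib

section
/- If a sequence m = (m(n))_{n≥0} of positive real numbers with m(0) = 1 preserves summability, then m preserves Gevrey order; in particular, there exist constants a, A > 0 such that aⁿ ≤ m(n) ≤ Aⁿ for every n ∈ ℕ. -/
open scoped Real

noncomputable section

/-- The open sector in direction `d` with opening `α` in `ℂ \ {0}`. -/
def Sector (d α : ℝ) : Set ℂ :=
  {z : ℂ | z ≠ 0 ∧ ∃ φ : ℝ, |φ - d| < α / 2 ∧
    z = (‖z‖ : ℂ) * Complex.exp (φ * Complex.I)}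

/-- The disc-sector `S_d(α) ∪ D_r`. -/
def DiscSector (d α r : ℝ) : Set ℂ := Sector d α ∪ Metric.ball 0 r

variable {E : Type*} [NormedAddCommGroup E] [NormedSpace ℂ E]

/-- `f` has exponential growth of order at most `k` on the disc-sector `S_d(α) ∪ D_r`. -/
def ExpGrowthOn (k d α r : ℝ) (f : ℂ → E) : Prop :=
  ∀ α' ∈ Set.Ioo (0 : ℝ) α, ∀ r' ∈ Set.Ioo (0 : ℝ) r, ∃ A B : ℝ, 0 < A ∧ 0 < B ∧
    ∀ x ∈ DiscSector d α' r', ‖f x‖ ≤ A * Real.exp (B * ‖x‖ ^ k)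

/-- The power series with coefficients `c` has positive radius of convergence and its sum
near `0` extends to a holomorphic function on the disc-sector `S_d(α) ∪ D_r` of exponential
growth of order at most `k`. -/
def ExtendsOn (k d α r : ℝ) (c : ℕ → E) : Prop :=
  ∃ f : ℂ → E, DifferentiableOn ℂ f (DiscSector d α r) ∧ ExpGrowthOn k d α r f ∧
    ∃ ρ : ℝ, 0 < ρ ∧ ρ ≤ r ∧ ∀ t ∈ Metric.ball (0 : ℂ) ρ,
      HasSum (fun n : ℕ => t ^ n • c n) (f t)

/-- The power series with coefficients `c` has positive radius of convergence and its sum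
near `0` extends to a holomorphic function of exponential growth of order at most `k`
on some disc-sector in direction `d`. -/
def ExtendsToSector (k d : ℝ) (c : ℕ → E) : Prop :=
  ∃ α r : ℝ, 0 < α ∧ α < 2 * π ∧ 0 < r ∧ ExtendsOn k d α r c

/-- The formal power series `Σ aₙ tⁿ` is `k`-summable in direction `d`. -/
def KSummable (k d : ℝ) (a : ℕ → E) : Prop :=
  ExtendsToSector k d (fun n => ((Real.Gamma (1 + (n : ℝ) / k) : ℂ))⁻¹ • a n)

/-- The formal power series `Σ aₙ tⁿ` has Gevrey order `s`. -/
def GevreyOrder (s : ℝ) (a : ℕ → E) : Prop :=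
  ∃ B C : ℝ, 0 < B ∧ 0 < C ∧ ∀ n : ℕ, ‖a n‖ ≤ B * C ^ n * (n.factorial : ℝ) ^ s

/-- The sequence `m` preserves Gevrey order. -/
def PreservesGevreyOrder (m : ℕ → ℝ) : Prop :=
  ∀ s : ℝ, ∀ (E : Type) [NormedAddCommGroup E] [NormedSpace ℂ E] [CompleteSpace E],
    ∀ a : ℕ → E, GevreyOrder s a ↔ GevreyOrder s (fun n => ((m n : ℂ))⁻¹ • a n)

/-- The sequence `m` preserves summability. -/
def PreservesSummability (m : ℕ → ℝ) : Prop :=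
  ∀ k d : ℝ, 0 < k → ∀ (E : Type) [NormedAddCommGroup E] [NormedSpace ℂ E] [CompleteSpace E],
    ∀ a : ℕ → E, KSummable k d a ↔ KSummable k d (fun n => ((m n : ℂ))⁻¹ • a n)

/- ### Auxiliary lemmas -/

lemma gammaR (n : ℕ) : Real.Gamma (1 + (n : ℝ) / 1) = (n.factorial : ℝ) := by
  rw [div_one, add_comm]
  exact_mod_cast Real.Gamma_nat_eq_factorial n

lemma gammaC (n : ℕ) : ((Real.Gamma (1 + (n : ℝ) / 1) : ℝ) : ℂ) = ((n.factorial : ℝ) : ℂ) := by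
  rw [gammaR]

lemma sector_re_nonpos {α : ℝ} (hα : α ≤ π / 2) {z : ℂ} (hz : z ∈ Sector π α) :
    z.re ≤ 0 := by
  obtain ⟨hz0, φ, hφ, hzeq⟩ := hz
  have hpi := Real.pi_pos
  obtain ⟨hφ1, hφ2⟩ := abs_lt.1 hφ
  have h1 : π / 2 ≤ φ := by linarith
  have h2 : φ ≤ π + π / 2 := by linarith
  have hcos : Real.cos φ ≤ 0 := Real.cos_nonpos_of_pi_div_two_le_of_le h1 h2
  have hre : z.re = ‖z‖ * Real.cos φ := by
    conv_lhs => rw [hzeq]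
    rw [Complex.re_ofReal_mul, Complex.exp_ofReal_mul_I_re]
  rw [hre]
  exact mul_nonpos_of_nonneg_of_nonpos (norm_nonneg z) hcos

lemma discSector_norm {α' r' : ℝ} (hα : α' ≤ π / 2) (hr : r' ≤ 1 / 2) {z : ℂ}
    (hz : z ∈ DiscSector π α' r') : (1 : ℝ) / 2 ≤ ‖1 - z‖ := by
  rcases hz with hz | hz
  · have h := sector_re_nonpos hα hz
    have h1 : (1 : ℝ) / 2 ≤ (1 - z).re := by
      simp only [Complex.sub_re, Complex.one_re]
      linarith
    calc (1 : ℝ) / 2 ≤ (1 - z).re := h1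
      _ ≤ ‖1 - z‖ := Complex.re_le_norm _
      _ = ‖1 - z‖ := rfl
  · have hz' : ‖z‖ < 1 / 2 := lt_of_lt_of_le (mem_ball_zero_iff.mp hz) hr
    have := norm_sub_norm_le (1 : ℂ) z
    rw [norm_one] at this
    linarith

/-- Any series whose 1-Borel coefficients are all `1` is `1`-summable in direction `π`. -/
lemma ksummable_of_borel_one (c : ℕ → ℂ)
    (hc : ∀ n : ℕ, ((Real.Gamma (1 + (n : ℝ) / 1) : ℂ))⁻¹ • c n = 1) :
    KSummable 1 π c := by
  have hpi := Real.pi_pos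
  refine ⟨π / 2, 1 / 2, by positivity, by linarith, by norm_num,
    fun z => (1 - z)⁻¹, ?_, ?_, 1 / 2, by norm_num, le_refl _, ?_⟩
  · intro z hz
    have h := discSector_norm (le_refl _) (le_refl _) hz
    have hne : (1 : ℂ) - z ≠ 0 := by
      intro h0
      rw [h0, norm_zero] at h
      linarith
    exact (((differentiableAt_const (1 : ℂ)).sub differentiableAt_id).inv hne).differentiableWithinAt
  · intro α' hα' r' hr'
    refine ⟨2, 1, by norm_num, by norm_num, fun x hx => ?_⟩
    have h := discSector_norm hα'.2.le hr'.2.le hx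
    have h1 : ‖(1 - x)⁻¹‖ ≤ 2 := by
      rw [norm_inv]
      have h2 : ‖(1 : ℂ) - x‖⁻¹ ≤ ((1 : ℝ) / 2)⁻¹ := by
        apply inv_anti₀ (by norm_num) h
      simpa using h2
    have h2 : (1 : ℝ) ≤ Real.exp (1 * ‖x‖ ^ (1 : ℝ)) := by
      apply Real.one_le_exp
      positivity
    calc ‖(1 - x)⁻¹‖ ≤ 2 := h1
      _ ≤ 2 * Real.exp (1 * ‖x‖ ^ (1 : ℝ)) := by nlinarith
  · intro t ht
    have ht' : ‖t‖ < 1 := lt_trans (mem_ball_zero_iff.mp ht) (by norm_num)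
    have hgeo := hasSum_geometric_of_norm_lt_one ht'
    show HasSum (fun n : ℕ => t ^ n • ((Real.Gamma (1 + (n : ℝ) / 1) : ℂ))⁻¹ • c n) ((1 - t)⁻¹)
    have heq : (fun n : ℕ => t ^ n • ((Real.Gamma (1 + (n : ℝ) / 1) : ℂ))⁻¹ • c n)
        = fun n : ℕ => t ^ n := by
      funext n
      rw [hc n, smul_eq_mul, mul_one]
    rw [heq]
    exact hgeo

/-- `1`-summability in any direction gives the Gevrey-1 coefficient bound. -/
lemma coeff_bound {d : ℝ} (c : ℕ → ℂ) (h : KSummable 1 d c) :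
    ∃ M C : ℝ, 0 < M ∧ 0 < C ∧ ∀ n, ‖c n‖ ≤ M * C ^ n * (n.factorial : ℝ) := by
  obtain ⟨α, r, hα, hα2, hr, f, hdiff, hgrow, ρ, hρ, hρr, hsum⟩ := h
  set t : ℂ := ((ρ / 2 : ℝ) : ℂ) with htdef
  have ht : t ∈ Metric.ball (0 : ℂ) ρ := by
    rw [mem_ball_zero_iff, htdef, Complex.norm_real, Real.norm_eq_abs,
      abs_of_pos (by linarith)]
    linarith
  have hsum' := hsum t ht
  have hs : Summable (fun n : ℕ => ‖t ^ n • ((Real.Gamma (1 + (n : ℝ) / 1) : ℂ))⁻¹ • c n‖) :=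
    summable_norm_iff.mpr hsum'.summable
  have hTnn : 0 ≤ ∑' n : ℕ, ‖t ^ n • ((Real.Gamma (1 + (n : ℝ) / 1) : ℂ))⁻¹ • c n‖ :=
    tsum_nonneg fun n => norm_nonneg _
  refine ⟨(∑' n : ℕ, ‖t ^ n • ((Real.Gamma (1 + (n : ℝ) / 1) : ℂ))⁻¹ • c n‖) + 1, 2 / ρ,
    by linarith, by positivity, fun n => ?_⟩
  have hfac : (0 : ℝ) < (n.factorial : ℝ) := by exact_mod_cast n.factorial_pos
  have hnorm : ‖t ^ n • ((Real.Gamma (1 + (n : ℝ) / 1) : ℂ))⁻¹ • c n‖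
      = (ρ / 2) ^ n * ((n.factorial : ℝ))⁻¹ * ‖c n‖ := by
    rw [norm_smul, norm_smul, norm_pow, htdef, Complex.norm_real, Real.norm_eq_abs,
      abs_of_pos (by linarith : (0:ℝ) < ρ / 2), norm_inv, gammaC, Complex.norm_real,
      Real.norm_eq_abs, abs_of_pos hfac]
    ring
  have key : (ρ / 2) ^ n * ((n.factorial : ℝ))⁻¹ * ‖c n‖
      ≤ ∑' n : ℕ, ‖t ^ n • ((Real.Gamma (1 + (n : ℝ) / 1) : ℂ))⁻¹ • c n‖ := by
    rw [← hnorm]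
    exact hs.le_tsum n fun j _ => norm_nonneg _
  set T := ∑' n : ℕ, ‖t ^ n • ((Real.Gamma (1 + (n : ℝ) / 1) : ℂ))⁻¹ • c n‖ with hT
  have hprod : (ρ / 2) ^ n * (2 / ρ) ^ n = 1 := by
    rw [← mul_pow]
    have : ρ / 2 * (2 / ρ) = 1 := by field_simp
    rw [this, one_pow]
  have heq : (ρ / 2) ^ n * ((n.factorial : ℝ))⁻¹ * ‖c n‖ * ((2 / ρ) ^ n * (n.factorial : ℝ))
      = ((ρ / 2) ^ n * (2 / ρ) ^ n) * (((n.factorial : ℝ))⁻¹ * (n.factorial : ℝ)) * ‖c n‖ := by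
    ring
  calc ‖c n‖
      = (ρ / 2) ^ n * ((n.factorial : ℝ))⁻¹ * ‖c n‖ * ((2 / ρ) ^ n * (n.factorial : ℝ)) := by
        rw [heq, hprod, inv_mul_cancel₀ (ne_of_gt hfac), one_mul, one_mul]
    _ ≤ T * ((2 / ρ) ^ n * (n.factorial : ℝ)) :=
        mul_le_mul_of_nonneg_right key (by positivity)
    _ ≤ (T + 1) * ((2 / ρ) ^ n * (n.factorial : ℝ)) := by
        apply mul_le_mul_of_nonneg_right (by linarith) (by positivity)
    _ = (T + 1) * (2 / ρ) ^ n * (n.factorial : ℝ) := by ring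

/-- a sequence preserving summability preserves Gevrey order; in particular it
is a sequence of order `0`. -/
theorem stmt15 (m : ℕ → ℝ) (hpos : ∀ n, 0 < m n) (hm0 : m 0 = 1)
    (hpres : PreservesSummability m) :
    PreservesGevreyOrder m ∧
      ∃ a A : ℝ, 0 < a ∧ 0 < A ∧ ∀ n : ℕ, a ^ n ≤ m n ∧ m n ≤ A ^ n := by
  have hmne : ∀ n, (m n : ℂ) ≠ 0 := fun n => Complex.ofReal_ne_zero.mpr (ne_of_gt (hpos n))
  have hfacR : ∀ n : ℕ, (0 : ℝ) < (n.factorial : ℝ) := fun n => by exact_mod_cast n.factorial_pos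
  have hfacC : ∀ n : ℕ, ((n.factorial : ℝ) : ℂ) ≠ 0 :=
    fun n => Complex.ofReal_ne_zero.mpr (ne_of_gt (hfacR n))
  -- Upper bound: apply hpres backwards with aₙ = m n * n!
  have hk1 : KSummable 1 π (fun n => ((m n : ℂ))⁻¹ • ((m n : ℂ) * ((n.factorial : ℝ) : ℂ))) := by
    apply ksummable_of_borel_one
    intro n
    rw [gammaC, smul_eq_mul, smul_eq_mul]
    field_simp
    rw [mul_comm]
    exact div_self (mul_ne_zero (hmne n) (hfacC n))
  have hk2 : KSummable 1 π (fun n => (m n : ℂ) * ((n.factorial : ℝ) : ℂ)) :=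
    (hpres 1 π one_pos ℂ _).mpr hk1
  obtain ⟨M₁, C₁, hM₁, hC₁, hub⟩ := coeff_bound _ hk2
  have hub' : ∀ n, m n ≤ M₁ * C₁ ^ n := by
    intro n
    have h := hub n
    rw [norm_mul, Complex.norm_real, Complex.norm_real, Real.norm_eq_abs, Real.norm_eq_abs,
      abs_of_pos (hpos n), abs_of_pos (hfacR n)] at h
    exact le_of_mul_le_mul_right h (hfacR n)
  -- Lower bound: apply hpres forwards with aₙ = n!
  have hk3 : KSummable 1 π (fun n => ((n.factorial : ℝ) : ℂ)) := by
    apply ksummable_of_borel_one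
    intro n
    rw [gammaC, smul_eq_mul]
    exact inv_mul_cancel₀ (hfacC n)
  have hk4 : KSummable 1 π (fun n => ((m n : ℂ))⁻¹ • ((n.factorial : ℝ) : ℂ)) :=
    (hpres 1 π one_pos ℂ _).mp hk3
  obtain ⟨M₂, C₂, hM₂, hC₂, hlb⟩ := coeff_bound _ hk4
  have hlb' : ∀ n, 1 ≤ m n * (M₂ * C₂ ^ n) := by
    intro n
    have h := hlb n
    rw [norm_smul, norm_inv, Complex.norm_real, Real.norm_eq_abs, abs_of_pos (hpos n),
      Complex.norm_real, Real.norm_eq_abs, abs_of_pos (hfacR n)] at h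
    have h2 : (m n)⁻¹ ≤ M₂ * C₂ ^ n := le_of_mul_le_mul_right h (hfacR n)
    have h3 := mul_le_mul_of_nonneg_left h2 (hpos n).le
    rwa [mul_inv_cancel₀ (ne_of_gt (hpos n))] at h3
  -- Geometric constants
  set A : ℝ := max C₁ (M₁ * C₁) with hA
  set a : ℝ := min C₂⁻¹ ((M₂ * C₂)⁻¹) with ha
  have hApos : 0 < A := lt_max_iff.mpr (Or.inl hC₁)
  have hapos : 0 < a := lt_min (by positivity) (by positivity)
  have hbounds : ∀ n, a ^ n ≤ m n ∧ m n ≤ A ^ n := by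
    intro n
    cases n with
    | zero => simp [hm0]
    | succ k =>
      constructor
      · -- lower bound
        have hstep : a ^ (k + 1) ≤ (C₂⁻¹) ^ k * (M₂ * C₂)⁻¹ := by
          rw [pow_succ]
          exact mul_le_mul (pow_le_pow_left₀ hapos.le (min_le_left _ _) k)
            (min_le_right _ _) hapos.le (by positivity)
        have hone : ((C₂⁻¹) ^ k * (M₂ * C₂)⁻¹) * (M₂ * C₂ ^ (k + 1)) = 1 := by
          rw [pow_succ]
          field_simp
          ring_nf
          rw [← mul_pow, mul_inv_cancel₀ hC₂.ne', one_pow]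
        have h4 : a ^ (k + 1) * (M₂ * C₂ ^ (k + 1)) ≤ 1 := by
          calc a ^ (k + 1) * (M₂ * C₂ ^ (k + 1))
              ≤ ((C₂⁻¹) ^ k * (M₂ * C₂)⁻¹) * (M₂ * C₂ ^ (k + 1)) :=
                mul_le_mul_of_nonneg_right hstep (by positivity)
            _ = 1 := hone
        have h5 : a ^ (k + 1) * (M₂ * C₂ ^ (k + 1)) ≤ m (k + 1) * (M₂ * C₂ ^ (k + 1)) :=
          le_trans h4 (hlb' (k + 1))
        exact le_of_mul_le_mul_right h5 (by positivity)
      · -- upper bound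
        calc m (k + 1) ≤ M₁ * C₁ ^ (k + 1) := hub' (k + 1)
          _ = (M₁ * C₁) * C₁ ^ k := by rw [pow_succ]; ring
          _ ≤ A * A ^ k :=
              mul_le_mul (le_max_right _ _) (pow_le_pow_left₀ hC₁.le (le_max_left _ _) k)
                (by positivity) hApos.le
          _ = A ^ (k + 1) := by rw [pow_succ]; ring
  refine ⟨?_, a, A, hapos, hApos, hbounds⟩
  -- Gevrey preservation from the geometric bounds
  intro s F _ _ _ a'
  constructor
  · rintro ⟨B, C, hB, hC, h⟩
    refine ⟨B, C / a, hB, by positivity, fun n => ?_⟩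
    show ‖((m n : ℂ))⁻¹ • a' n‖ ≤ B * (C / a) ^ n * (n.factorial : ℝ) ^ s
    have hnorm : ‖((m n : ℂ))⁻¹ • a' n‖ = (m n)⁻¹ * ‖a' n‖ := by
      rw [norm_smul, norm_inv, Complex.norm_real, Real.norm_eq_abs, abs_of_pos (hpos n)]
    rw [hnorm]
    have h1 : (m n)⁻¹ ≤ (a ^ n)⁻¹ :=
      inv_anti₀ (by positivity) (hbounds n).1
    have hrs : (0 : ℝ) ≤ (n.factorial : ℝ) ^ s := Real.rpow_nonneg (by positivity) s
    calc (m n)⁻¹ * ‖a' n‖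
        ≤ (a ^ n)⁻¹ * (B * C ^ n * (n.factorial : ℝ) ^ s) :=
          mul_le_mul h1 (h n) (norm_nonneg _) (by positivity)
      _ = B * (C / a) ^ n * (n.factorial : ℝ) ^ s := by
          rw [div_pow]
          field_simp
          try ring
  · rintro ⟨B, C, hB, hC, h⟩
    refine ⟨B, A * C, hB, by positivity, fun n => ?_⟩
    have hnorm : ‖a' n‖ = m n * ‖((m n : ℂ))⁻¹ • a' n‖ := by
      rw [norm_smul, norm_inv, Complex.norm_real, Real.norm_eq_abs, abs_of_pos (hpos n)]
      rw [← mul_assoc, mul_inv_cancel₀ (ne_of_gt (hpos n)), one_mul]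
    have h2 : ‖((m n : ℂ))⁻¹ • a' n‖ ≤ B * C ^ n * (n.factorial : ℝ) ^ s := h n
    calc ‖a' n‖ = m n * ‖((m n : ℂ))⁻¹ • a' n‖ := hnorm
      _ ≤ A ^ n * (B * C ^ n * (n.factorial : ℝ) ^ s) :=
          mul_le_mul (hbounds n).2 h2 (norm_nonneg _) (by positivity)
      _ = B * (A * C) ^ n * (n.factorial : ℝ) ^ s := by
          rw [mul_pow]
          ring
end
end

section
/- If a sequence m = (m(n))_{n≥0} of positive real numbers with m(0) = 1 preserves summability, then m preserves multisummability: for every N ≥ 1, every k₁ > ⋯ > k_N > 0, every admissible multidirection (d₁,…,d_N) ∈ ℝᴺ, every complex Banach space E and every û ∈ E[[t]], û is (k₁,…,k_N)-multisummable in (d₁,…,d_N) if and only if B_m û is (k₁,…,k_N)-multisummable in (d₁,…,d_N). -/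
open scoped Real

noncomputable section

variable {E : Type*} [NormedAddCommGroup E] [NormedSpace ℂ E]

/-- `Σ aₙtⁿ` is `(k 0, …, k (N-1))`-multisummable in the multidirection `(d 0, …, d (N-1))`:
it is a sum of `N` series, the `j`-th being `k j`-summable in direction `d j`. -/
def Multisummable {E : Type*} [NormedAddCommGroup E] [NormedSpace ℂ E]
    (N : ℕ) (k d : Fin N → ℝ) (a : ℕ → E) : Prop :=
  ∃ c : Fin N → ℕ → E, (∀ n, a n = ∑ j, c j n) ∧ ∀ j, KSummable (k j) (d j) (c j)

/-- `(d 0, …, d (N-1))` is an admissible multidirection for `(k 0, …, k (N-1))`. -/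
def AdmissibleMultidirection (N : ℕ) (k d : Fin N → ℝ) : Prop :=
  ∀ j : Fin N, ∀ h : (j : ℕ) + 1 < N,
    |d ⟨(j : ℕ) + 1, h⟩ - d j| ≤ Real.pi * (1 / k ⟨(j : ℕ) + 1, h⟩ - 1 / k j) / 2

/-- a sequence preserving summability preserves multisummability. -/
theorem stmt18 (m : ℕ → ℝ) (hpos : ∀ n, 0 < m n) (hm0 : m 0 = 1)
    (hpres : PreservesSummability m) :
    ∀ N : ℕ, 1 ≤ N → ∀ k d : Fin N → ℝ,
      (∀ i j : Fin N, i < j → k j < k i) → (∀ j, 0 < k j) →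
      AdmissibleMultidirection N k d →
      ∀ (E : Type) [NormedAddCommGroup E] [NormedSpace ℂ E] [CompleteSpace E],
        ∀ a : ℕ → E,
          Multisummable N k d a ↔ Multisummable N k d (fun n => ((m n : ℂ))⁻¹ • a n) := by
  intro N hN k d hk hkpos hadm E _ _ _ a
  constructor
  · rintro ⟨c, hc, hs⟩
    refine ⟨fun j n => ((m n : ℂ))⁻¹ • c j n, fun n => ?_, fun j => ?_⟩
    · dsimp only; rw [hc n, Finset.smul_sum]
    · exact (hpres (k j) (d j) (hkpos j) E (c j)).mp (hs j)
  · rintro ⟨c, hc, hs⟩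
    refine ⟨fun j n => (m n : ℂ) • c j n, fun n => ?_, fun j => ?_⟩
    · have hm : (m n : ℂ) ≠ 0 := by exact_mod_cast (hpos n).ne'
      calc a n = (m n : ℂ) • (((m n : ℂ))⁻¹ • a n) := (smul_inv_smul₀ hm _).symm
        _ = (m n : ℂ) • ∑ j, c j n := congrArg (fun x => (m n : ℂ) • x) (hc n)
        _ = ∑ j, (m n : ℂ) • c j n := Finset.smul_sum
    · have heq : (fun n => ((m n : ℂ))⁻¹ • ((m n : ℂ) • c j n)) = c j := by
        funext n; exact inv_smul_smul₀ (by exact_mod_cast (hpos n).ne') _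
      apply (hpres (k j) (d j) (hkpos j) E (fun n => (m n : ℂ) • c j n)).mpr
      rw [heq]; exact hs j
end
end
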